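/- arXiv:math/0702808 — 2 statements merged into one kernel-verified Lean document; each statement's English description precedes it below -/
import Mathlib

section
/- For every positive integer m, the number of reverse alternating permutations of [2m] with exactly m+1 fixed points equals the number of alternating permutations of [2m-2] with exactly m-1 fixed points. -/
/-- `π` is an alternating permutation: `π 1 > π 2 < π 3 > π 4 < ⋯`
(here stated with 0-indexed positions). -/
def IsAlternating {n : ℕ} (π : Equiv.Perm (Fin n)) : Prop :=
  ∀ i : ℕ, ∀ h : i + 1 < n,
    if i % 2 = 0 then π ⟨i + 1, h⟩ < π ⟨i, Nat.lt_of_succ_lt h⟩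
    else π ⟨i, Nat.lt_of_succ_lt h⟩ < π ⟨i + 1, h⟩

/-- `π` is a reverse alternating permutation: `π 1 < π 2 > π 3 < π 4 > ⋯`
(here stated with 0-indexed positions). -/
def IsRevAlternating {n : ℕ} (π : Equiv.Perm (Fin n)) : Prop :=
  ∀ i : ℕ, ∀ h : i + 1 < n,
    if i % 2 = 0 then π ⟨i, Nat.lt_of_succ_lt h⟩ < π ⟨i + 1, h⟩
    else π ⟨i + 1, h⟩ < π ⟨i, Nat.lt_of_succ_lt h⟩

/-- The number of fixed points of a permutation of `Fin n`. -/
def fixedPointCount {n : ℕ} (π : Equiv.Perm (Fin n)) : ℕ :=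
  (Finset.univ.filter fun i => π i = i).card

open Equiv Finset

def padFun {n : ℕ} (f : Fin n → Fin n) : Fin (n + 2) → Fin (n + 2) :=
  fun i =>
    if h0 : (i : ℕ) = 0 then ⟨0, by omega⟩
    else if hl : (i : ℕ) = n + 1 then ⟨n + 1, by omega⟩
    else ⟨(f ⟨(i : ℕ) - 1, by omega⟩ : Fin n) + 1, by
      have := (f ⟨(i : ℕ) - 1, by omega⟩).isLt; omega⟩

lemma padFun_zero {n : ℕ} (f : Fin n → Fin n) : padFun f ⟨0, by omega⟩ = ⟨0, by omega⟩ := by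
  unfold padFun; rw [dif_pos rfl]

lemma padFun_last {n : ℕ} (f : Fin n → Fin n) :
    padFun f ⟨n + 1, by omega⟩ = ⟨n + 1, by omega⟩ := by
  unfold padFun; rw [dif_neg (by simp), dif_pos (by simp)]

lemma padFun_mid {n : ℕ} (f : Fin n → Fin n) (i : ℕ) (h : i < n) :
    padFun f ⟨i + 1, by omega⟩ =
      ⟨(f ⟨i, h⟩ : ℕ) + 1, by have := (f ⟨i, h⟩).isLt; omega⟩ := by
  unfold padFun
  rw [dif_neg (by simp), dif_neg (by simp; omega)]
  have e : (⟨i + 1 - 1, by omega⟩ : Fin n) = ⟨i, h⟩ := by apply Fin.ext; simp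
  apply Fin.ext
  simp only [e]

lemma padFun_inv {n : ℕ} {f g : Fin n → Fin n} (h : ∀ x, g (f x) = x) :
    Function.LeftInverse (padFun g) (padFun f) := by
  intro i
  rcases Nat.lt_trichotomy 0 (i : ℕ) with h0 | h0 | h0
  · rcases Nat.lt_trichotomy (i : ℕ) (n + 1) with hl | hl | hl
    · -- middle: i = j + 1 with j < n
      obtain ⟨j, hj, hi⟩ : ∃ j, ∃ hj : j < n, i = ⟨j + 1, by omega⟩ := by
        refine ⟨(i : ℕ) - 1, by omega, ?_⟩
        apply Fin.ext; simp; omega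
      rw [hi, padFun_mid f j hj]
      have hlt := (f ⟨j, hj⟩).isLt
      rw [padFun_mid g (f ⟨j, hj⟩ : ℕ) hlt]
      have e : (⟨((f ⟨j, hj⟩ : Fin n) : ℕ), hlt⟩ : Fin n) = f ⟨j, hj⟩ := Fin.eta _ _
      apply Fin.ext
      simp only [e, h]
    · have : i = ⟨n + 1, by omega⟩ := by apply Fin.ext; simp; omega
      rw [this, padFun_last, padFun_last]
    · omega
  · have : i = ⟨0, by omega⟩ := by apply Fin.ext; simp only [Fin.val_mk]; omega
    rw [this, padFun_zero, padFun_zero]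
  · omega

def pad {n : ℕ} (σ : Perm (Fin n)) : Perm (Fin (n + 2)) where
  toFun := padFun σ
  invFun := padFun σ.symm
  left_inv := padFun_inv (fun x => σ.symm_apply_apply x)
  right_inv := padFun_inv (fun x => σ.apply_symm_apply x)

lemma pad_zero {n : ℕ} (σ : Perm (Fin n)) : pad σ ⟨0, by omega⟩ = ⟨0, by omega⟩ :=
  padFun_zero σ

lemma pad_last {n : ℕ} (σ : Perm (Fin n)) : pad σ ⟨n + 1, by omega⟩ = ⟨n + 1, by omega⟩ :=
  padFun_last σ

lemma pad_mid {n : ℕ} (σ : Perm (Fin n)) (i : ℕ) (h : i < n) :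
    pad σ ⟨i + 1, by omega⟩ =
      ⟨(σ ⟨i, h⟩ : ℕ) + 1, by have := (σ ⟨i, h⟩).isLt; omega⟩ :=
  padFun_mid σ i h

def midEmb (n : ℕ) : Fin n ↪ Fin (n + 2) :=
  ⟨fun j => ⟨(j : ℕ) + 1, by omega⟩, by
    intro a b hab
    apply Fin.ext
    have := congrArg Fin.val hab
    simpa using this⟩

lemma fixedCount_pad {n : ℕ} (σ : Perm (Fin n)) :
    fixedPointCount (pad σ) = fixedPointCount σ + 2 := by
  classical
  unfold fixedPointCount
  have hset : (univ.filter fun i => pad σ i = i)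
      = insert ⟨0, by omega⟩ (insert ⟨n + 1, by omega⟩
          ((univ.filter fun j => σ j = j).map (midEmb n))) := by
    ext i
    simp only [mem_filter, mem_univ, true_and, mem_insert, mem_map, midEmb,
      Function.Embedding.coeFn_mk]
    rcases Nat.lt_trichotomy 0 (i : ℕ) with h0 | h0 | h0
    · rcases Nat.lt_trichotomy (i : ℕ) (n + 1) with hl | hl | hl
      · obtain ⟨j, hj, hi⟩ : ∃ j, ∃ hj : j < n, i = ⟨j + 1, by omega⟩ := by
          refine ⟨(i : ℕ) - 1, by omega, ?_⟩
          apply Fin.ext; simp; omega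
        rw [hi, pad_mid σ j hj]
        constructor
        · intro hfix
          right; right
          refine ⟨⟨j, hj⟩, ?_, ?_⟩
          · apply Fin.ext
            have := congrArg Fin.val hfix
            simp at this ⊢; omega
          · rfl
        · intro hmem
          rcases hmem with hmem | hmem | ⟨a, ha, hea⟩
          · exact absurd (congrArg Fin.val hmem) (by simp)
          · exact absurd (congrArg Fin.val hmem) (by simp; omega)
          · have hav : (a : ℕ) = j := by
              have := congrArg Fin.val hea; change (a : ℕ) + 1 = j + 1 at this; omega
            have : a = ⟨j, hj⟩ := Fin.ext hav
            subst this
            apply Fin.ext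
            have := congrArg Fin.val ha
            simp at this ⊢; omega
      · have hi : i = ⟨n + 1, by omega⟩ := by apply Fin.ext; simpa using hl
        rw [hi, pad_last]
        simp
      · omega
    · have hi : i = ⟨0, by omega⟩ := by apply Fin.ext; simp only [Fin.val_mk]; omega
      rw [hi, pad_zero]
      simp
    · omega
  rw [hset]
  have hnm : (⟨n + 1, by omega⟩ : Fin (n + 2)) ∉
      (univ.filter fun j => σ j = j).map (midEmb n) := by
    simp only [mem_map, midEmb, Function.Embedding.coeFn_mk, not_exists]
    intro a h
    have := congrArg Fin.val h.2
    change (a : ℕ) + 1 = n + 1 at this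
    have := a.isLt; omega
  have h0m : (⟨0, by omega⟩ : Fin (n + 2)) ∉
      insert (⟨n + 1, by omega⟩ : Fin (n + 2))
        ((univ.filter fun j => σ j = j).map (midEmb n)) := by
    simp only [mem_insert, mem_map, midEmb, Function.Embedding.coeFn_mk, not_or, not_exists]
    constructor
    · intro hc
      have := congrArg Fin.val hc; simp at this
    · intro a h
      have := congrArg Fin.val h.2; change (a : ℕ) + 1 = 0 at this; omega
  rw [card_insert_of_notMem h0m, card_insert_of_notMem hnm, card_map]

lemma revAlt_pad_iff (k : ℕ) (σ : Perm (Fin (2 * k))) :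
    IsRevAlternating (pad σ) ↔ IsAlternating σ := by
  constructor
  · intro hrev i h
    have h2 : (i + 1) + 1 < 2 * k + 2 := by omega
    have hr := hrev (i + 1) h2
    rw [pad_mid σ i (by omega), pad_mid σ (i + 1) (by omega)] at hr
    rcases Nat.mod_two_eq_zero_or_one i with hp | hp
    · rw [if_pos hp]
      rw [if_neg (by omega)] at hr
      rw [Fin.lt_def] at hr ⊢
      simpa using hr
    · rw [if_neg (by omega)]
      rw [if_pos (by omega)] at hr
      rw [Fin.lt_def] at hr ⊢
      simpa using hr
  · intro halt i h
    rcases Nat.eq_or_lt_of_le (Nat.zero_le i) with h0 | h0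
    · -- i = 0
      subst h0
      rw [if_pos (by omega)]
      rw [pad_zero σ]
      rw [Fin.lt_def]
      have hne : pad σ ⟨0 + 1, h⟩ ≠ pad σ ⟨0, by omega⟩ := by
        intro hc
        have := (pad σ).injective hc
        have := congrArg Fin.val this
        simp at this
      rw [pad_zero σ] at hne
      have : ((pad σ ⟨0 + 1, h⟩ : Fin (2 * k + 2)) : ℕ) ≠ 0 := by
        intro hc
        exact hne (Fin.ext (by simpa using hc))
      simpa using Nat.pos_of_ne_zero this
    · rcases Nat.lt_trichotomy i (2 * k) with hl | hl | hl
      · -- 1 ≤ i ≤ 2k - 1 : interior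
        obtain ⟨j, rfl⟩ : ∃ j, i = j + 1 := ⟨i - 1, by omega⟩
        have ha := halt j (by omega)
        rw [pad_mid σ j (by omega), pad_mid σ (j + 1) (by omega)]
        rcases Nat.mod_two_eq_zero_or_one j with hp | hp
        · rw [if_pos hp] at ha
          rw [if_neg (by omega)]
          rw [Fin.lt_def] at ha ⊢
          simpa using ha
        · rw [if_neg (by omega)] at ha
          rw [if_pos (by omega)]
          rw [Fin.lt_def] at ha ⊢
          simpa using ha
      · -- i = 2k
        subst hl
        rw [if_pos (by omega)]
        have hlast : (⟨2 * k + 1, h⟩ : Fin (2 * k + 2)) = ⟨2 * k + 1, by omega⟩ := rfl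
        rw [hlast, pad_last σ]
        rw [Fin.lt_def]
        have hne : pad σ ⟨2 * k, by omega⟩ ≠ ⟨2 * k + 1, by omega⟩ := by
          intro hc
          rw [← pad_last σ] at hc
          have := (pad σ).injective hc
          have := congrArg Fin.val this
          simp at this
        have hb := (pad σ ⟨2 * k, by omega⟩).isLt
        have : ((pad σ ⟨2 * k, by omega⟩ : Fin (2 * k + 2)) : ℕ) ≠ 2 * k + 1 := by
          intro hc
          exact hne (Fin.ext (by simpa using hc))
        simp only [Fin.val_mk] at *
        omega
      · omega

lemma endpoints_fixed (k : ℕ) (π : Perm (Fin (2 * k + 2)))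
    (hrev : IsRevAlternating π) (hc : fixedPointCount π = k + 2) :
    π ⟨0, by omega⟩ = ⟨0, by omega⟩ ∧ π ⟨2 * k + 1, by omega⟩ = ⟨2 * k + 1, by omega⟩ := by
  classical
  set F := univ.filter fun i : Fin (2 * k + 2) => π i = i with hF
  have hcard : F.card = k + 2 := hc
  set f : Fin (2 * k + 2) → ℕ := fun i => ((i : ℕ) + 1) / 2 with hf
  -- no two adjacent (odd, odd+1) positions are both fixed
  have hadj : ∀ i : ℕ, ∀ h : i + 1 < 2 * k + 2, i % 2 = 1 →
      ¬(π ⟨i, by omega⟩ = ⟨i, by omega⟩ ∧ π ⟨i + 1, h⟩ = ⟨i + 1, h⟩) := by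
    intro i h hodd ⟨h1, h2⟩
    have hr := hrev i h
    rw [if_neg (by omega)] at hr
    rw [h1, h2, Fin.lt_def] at hr
    simp at hr
  have hinj : Set.InjOn f F := by
    intro a ha b hb hab
    by_contra hne
    have hvne : (a : ℕ) ≠ (b : ℕ) := fun hc => hne (Fin.ext hc)
    -- wlog a < b
    rcases Nat.lt_or_ge (a : ℕ) (b : ℕ) with hlt | hge
    · have hb1 : (b : ℕ) = (a : ℕ) + 1 := by
        simp only [hf] at hab; omega
      have hodd : (a : ℕ) % 2 = 1 := by
        simp only [hf] at hab; omega
      refine hadj (a : ℕ) (by omega) hodd ⟨?_, ?_⟩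
      · have : a = (⟨(a : ℕ), by omega⟩ : Fin (2 * k + 2)) := Fin.ext rfl
        rw [← this]
        simpa [hF, mem_filter] using ha
      · have : b = (⟨(a : ℕ) + 1, by omega⟩ : Fin (2 * k + 2)) := Fin.ext hb1
        rw [← this]
        simpa [hF, mem_filter] using hb
    · have hlt : (b : ℕ) < (a : ℕ) := by omega
      have ha1 : (a : ℕ) = (b : ℕ) + 1 := by
        simp only [hf] at hab; omega
      have hodd : (b : ℕ) % 2 = 1 := by
        simp only [hf] at hab; omega
      refine hadj (b : ℕ) (by omega) hodd ⟨?_, ?_⟩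
      · have : b = (⟨(b : ℕ), by omega⟩ : Fin (2 * k + 2)) := Fin.ext rfl
        rw [← this]
        simpa [hF, mem_filter] using hb
      · have : a = (⟨(b : ℕ) + 1, by omega⟩ : Fin (2 * k + 2)) := Fin.ext ha1
        rw [← this]
        simpa [hF, mem_filter] using ha
  have himgcard : (F.image f).card = k + 2 := by
    rw [Finset.card_image_of_injOn hinj, hcard]
  have hsub : F.image f ⊆ Finset.range (k + 2) := by
    intro x hx
    rw [Finset.mem_image] at hx
    obtain ⟨i, _, rfl⟩ := hx
    rw [Finset.mem_range]
    have := i.isLt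
    simp only [hf]; omega
  have heq : F.image f = Finset.range (k + 2) :=
    Finset.eq_of_subset_of_card_le hsub (by rw [himgcard, Finset.card_range])
  constructor
  · have h0 : (0 : ℕ) ∈ F.image f := by rw [heq]; simp
    rw [Finset.mem_image] at h0
    obtain ⟨i, hi, hi0⟩ := h0
    have hiv : (i : ℕ) = 0 := by simp only [hf] at hi0; omega
    have : i = (⟨0, by omega⟩ : Fin (2 * k + 2)) := Fin.ext hiv
    rw [← this]
    simpa [hF, mem_filter] using hi
  · have h1 : (k + 1 : ℕ) ∈ F.image f := by rw [heq]; simp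
    rw [Finset.mem_image] at h1
    obtain ⟨i, hi, hi1⟩ := h1
    have hiv : (i : ℕ) = 2 * k + 1 := by
      have := i.isLt
      simp only [hf] at hi1; omega
    have : i = (⟨2 * k + 1, by omega⟩ : Fin (2 * k + 2)) := Fin.ext hiv
    rw [← this]
    simpa [hF, mem_filter] using hi

def stripFun {n : ℕ} (f : Fin (n + 2) → Fin (n + 2)) : Fin n → Fin n :=
  fun i => ⟨min (((f ⟨(i : ℕ) + 1, by omega⟩ : Fin (n + 2)) : ℕ) - 1) (n - 1),
    by have := i.isLt; omega⟩

lemma exists_pad {n : ℕ} (π : Perm (Fin (n + 2)))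
    (h0 : π ⟨0, by omega⟩ = ⟨0, by omega⟩)
    (hl : π ⟨n + 1, by omega⟩ = ⟨n + 1, by omega⟩) :
    ∃ σ : Perm (Fin n), pad σ = π := by
  classical
  have bound : ∀ i : ℕ, ∀ h : i < n,
      1 ≤ ((π ⟨i + 1, by omega⟩ : Fin (n + 2)) : ℕ) ∧
      ((π ⟨i + 1, by omega⟩ : Fin (n + 2)) : ℕ) ≤ n := by
    intro i h
    have hval := (π ⟨i + 1, by omega⟩).isLt
    constructor
    · by_contra hc
      have heq : π ⟨i + 1, by omega⟩ = ⟨0, by omega⟩ := by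
        apply Fin.ext; simp only [Fin.val_mk]; omega
      have := congrArg Fin.val (π.injective (heq.trans h0.symm))
      simp at this
    · by_contra hc
      have heq : π ⟨i + 1, by omega⟩ = ⟨n + 1, by omega⟩ := by
        apply Fin.ext; simp only [Fin.val_mk]; omega
      have := congrArg Fin.val (π.injective (heq.trans hl.symm))
      simp at this; omega
  have hinj : Function.Injective (stripFun π) := by
    intro a b hab
    have ha := bound a a.isLt
    have hb := bound b b.isLt
    have hv := congrArg Fin.val hab
    simp only [stripFun] at hv
    have hveq : ((π ⟨(a : ℕ) + 1, by omega⟩ : Fin (n + 2)) : ℕ)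
        = ((π ⟨(b : ℕ) + 1, by omega⟩ : Fin (n + 2)) : ℕ) := by omega
    have : π ⟨(a : ℕ) + 1, by omega⟩ = π ⟨(b : ℕ) + 1, by omega⟩ := Fin.ext hveq
    have := congrArg Fin.val (π.injective this)
    simp at this
    exact Fin.ext this
  have hbij := (Finite.injective_iff_bijective).1 hinj
  refine ⟨Equiv.ofBijective (stripFun π) hbij, ?_⟩
  apply Equiv.ext
  intro j
  rcases Nat.lt_trichotomy 0 (j : ℕ) with hj0 | hj0 | hj0
  · rcases Nat.lt_trichotomy (j : ℕ) (n + 1) with hjl | hjl | hjl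
    · obtain ⟨i, hi, hji⟩ : ∃ i, ∃ hi : i < n, j = ⟨i + 1, by omega⟩ := by
        refine ⟨(j : ℕ) - 1, by omega, ?_⟩
        apply Fin.ext; simp; omega
      rw [hji, pad_mid _ i hi]
      have hb := bound i hi
      apply Fin.ext
      simp only [Fin.val_mk, Equiv.ofBijective_apply, stripFun]
      omega
    · have hji : j = ⟨n + 1, by omega⟩ := by apply Fin.ext; simpa using hjl
      rw [hji, pad_last, hl]
    · omega
  · have hji : j = ⟨0, by omega⟩ := by apply Fin.ext; simp only [Fin.val_mk]; omega
    rw [hji, pad_zero, h0]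
  · omega

lemma key_count (k : ℕ) :
    Nat.card {π : Equiv.Perm (Fin (2 * k + 2)) //
        IsRevAlternating π ∧ fixedPointCount π = k + 2} =
      Nat.card {π : Equiv.Perm (Fin (2 * k)) //
        IsAlternating π ∧ fixedPointCount π = k} := by
  symm
  apply Nat.card_eq_of_bijective
    (f := fun σ : {π : Equiv.Perm (Fin (2 * k)) //
        IsAlternating π ∧ fixedPointCount π = k} =>
      (⟨pad σ.1, (revAlt_pad_iff k σ.1).2 σ.2.1, by
        rw [fixedCount_pad]; rw [σ.2.2]⟩ :
        {π : Equiv.Perm (Fin (2 * k + 2)) //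
          IsRevAlternating π ∧ fixedPointCount π = k + 2}))
  constructor
  · intro σ τ h
    have hp : pad σ.1 = pad τ.1 := congrArg Subtype.val h
    apply Subtype.ext
    apply Equiv.ext
    intro i
    have h1 := pad_mid σ.1 (i : ℕ) i.isLt
    have h2 := pad_mid τ.1 (i : ℕ) i.isLt
    rw [hp] at h1
    have := h1.symm.trans h2
    have hv := congrArg Fin.val this
    simp only [Fin.val_mk] at hv
    have heq : σ.1 ⟨(i : ℕ), i.isLt⟩ = τ.1 ⟨(i : ℕ), i.isLt⟩ := Fin.ext (by omega)
    have hi : (⟨(i : ℕ), i.isLt⟩ : Fin (2 * k)) = i := Fin.ext rfl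
    rw [hi] at heq
    exact heq
  · rintro ⟨π, hrev, hc⟩
    obtain ⟨h0, hl⟩ := endpoints_fixed k π hrev hc
    obtain ⟨σ, hσ⟩ := exists_pad π h0 hl
    have halt : IsAlternating σ := (revAlt_pad_iff k σ).1 (by rw [hσ]; exact hrev)
    have hcσ : fixedPointCount σ = k := by
      have := fixedCount_pad σ
      rw [hσ, hc] at this
      omega
    exact ⟨⟨σ, halt, hcσ⟩, Subtype.ext hσ⟩

/-- For every positive integer `m`, the number of reverse alternating permutations of `[2m]`
with exactly `m+1` fixed points equals the number of alternating permutations of `[2m-2]`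
with exactly `m-1` fixed points. -/
theorem reverse_alternating_count_eq (m : ℕ) (hm : 1 ≤ m) :
    Nat.card {π : Equiv.Perm (Fin (2 * m)) //
        IsRevAlternating π ∧ fixedPointCount π = m + 1} =
      Nat.card {π : Equiv.Perm (Fin (2 * m - 2)) //
        IsAlternating π ∧ fixedPointCount π = m - 1} := by
  obtain ⟨k, rfl⟩ : ∃ k, m = k + 1 := ⟨m - 1, by omega⟩
  exact key_count k
end

section
/- For every positive integer m, the number of alternating permutations of [2m-1] with exactly m fixed points equals the number of alternating permutations of [2m-2] with exactly m-1 fixed points. -/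
/-- Extend a permutation of `Fin n` to `Fin (n+1)` fixing the last point. -/
def extPerm {n : ℕ} (σ : Equiv.Perm (Fin n)) : Equiv.Perm (Fin (n + 1)) :=
  (finSuccEquivLast).symm.permCongr σ.optionCongr

lemma extPerm_castSucc {n : ℕ} (σ : Equiv.Perm (Fin n)) (i : Fin n) :
    extPerm σ i.castSucc = (σ i).castSucc := by
  simp [extPerm, Equiv.permCongr_apply]

lemma extPerm_last {n : ℕ} (σ : Equiv.Perm (Fin n)) :
    extPerm σ (Fin.last n) = Fin.last n := by
  simp [extPerm, Equiv.permCongr_apply]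

/-- Restrict a permutation of `Fin (n+1)` fixing the last point to `Fin n`. -/
def restrictPerm {n : ℕ} (π : Equiv.Perm (Fin (n + 1))) (h : π (Fin.last n) = Fin.last n) :
    Equiv.Perm (Fin n) where
  toFun i := (π i.castSucc).castPred
    (fun he => absurd (π.injective (he.trans h.symm)) (Fin.castSucc_lt_last i).ne)
  invFun i := (π⁻¹ i.castSucc).castPred
    (fun he => absurd (show i.castSucc = Fin.last n by
        rw [← h, ← he, ← Equiv.Perm.mul_apply, mul_inv_cancel, Equiv.Perm.one_apply]) (Fin.castSucc_lt_last i).ne)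
  left_inv i := by
    apply Fin.castSucc_injective
    simp [Fin.castSucc_castPred]
  right_inv i := by
    apply Fin.castSucc_injective
    simp [Fin.castSucc_castPred]

lemma castSucc_restrictPerm {n : ℕ} (π : Equiv.Perm (Fin (n + 1)))
    (h : π (Fin.last n) = Fin.last n) (i : Fin n) :
    (restrictPerm π h i).castSucc = π i.castSucc := by
  simp [restrictPerm, Fin.castSucc_castPred]

lemma extPerm_restrictPerm {n : ℕ} (π : Equiv.Perm (Fin (n + 1)))
    (h : π (Fin.last n) = Fin.last n) : extPerm (restrictPerm π h) = π := by
  ext x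
  induction x using Fin.lastCases with
  | last => rw [extPerm_last, h]
  | cast i => rw [extPerm_castSucc, castSucc_restrictPerm]

lemma restrictPerm_extPerm {n : ℕ} (σ : Equiv.Perm (Fin n))
    (h : extPerm σ (Fin.last n) = Fin.last n) : restrictPerm (extPerm σ) h = σ := by
  ext i
  have := castSucc_restrictPerm (extPerm σ) h i
  rw [extPerm_castSucc] at this
  exact congrArg Fin.val (Fin.castSucc_injective _ this)

lemma fpc_extPerm {n : ℕ} (σ : Equiv.Perm (Fin n)) :
    fixedPointCount (extPerm σ) = fixedPointCount σ + 1 := by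
  unfold fixedPointCount
  have hset : (Finset.univ.filter fun i => extPerm σ i = i) =
      insert (Fin.last n) ((Finset.univ.filter fun i => σ i = i).map Fin.castSuccEmb) := by
    ext x
    induction x using Fin.lastCases with
    | last =>
      simp [extPerm_last, Finset.mem_insert]
    | cast i =>
      constructor
      · intro hx
        have hx' : extPerm σ i.castSucc = i.castSucc := (Finset.mem_filter.1 hx).2
        rw [extPerm_castSucc] at hx'
        exact Finset.mem_insert.2 (Or.inr (Finset.mem_map.2 ⟨i,
          Finset.mem_filter.2 ⟨Finset.mem_univ _, Fin.castSucc_injective _ hx'⟩, rfl⟩))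
      · intro hx
        rcases Finset.mem_insert.1 hx with hx | hx
        · exact absurd hx (Fin.castSucc_lt_last i).ne
        · obtain ⟨j, hj, hji⟩ := Finset.mem_map.1 hx
          have hji' : Fin.castSucc j = Fin.castSucc i := hji
          have hje : j = i := Fin.castSucc_injective _ hji'
          subst hje
          refine Finset.mem_filter.2 ⟨Finset.mem_univ _, ?_⟩
          rw [extPerm_castSucc, (Finset.mem_filter.1 hj).2]
  rw [hset, Finset.card_insert_of_notMem, Finset.card_map]
  simp only [Finset.mem_map, Fin.castSuccEmb_apply]
  rintro ⟨j, -, hj⟩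
  exact (Fin.castSucc_lt_last j).ne hj

lemma isAlt_extPerm {k : ℕ} (σ : Equiv.Perm (Fin (2 * k))) (hσ : IsAlternating σ) :
    IsAlternating (extPerm σ) := by
  intro i h
  by_cases hi : i + 1 < 2 * k
  · have hσi := hσ i hi
    have e1 : (⟨i, Nat.lt_of_succ_lt h⟩ : Fin (2 * k + 1)) =
        Fin.castSucc ⟨i, Nat.lt_of_succ_lt hi⟩ := rfl
    have e2 : (⟨i + 1, h⟩ : Fin (2 * k + 1)) = Fin.castSucc ⟨i + 1, hi⟩ := rfl
    rw [e1, e2, extPerm_castSucc, extPerm_castSucc]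
    split_ifs with hpar
    · rw [if_pos hpar] at hσi
      exact Fin.castSucc_lt_castSucc_iff.mpr hσi
    · rw [if_neg hpar] at hσi
      exact Fin.castSucc_lt_castSucc_iff.mpr hσi
  · have hie : i + 1 = 2 * k := by omega
    rw [if_neg (by omega)]
    have e2 : (⟨i + 1, h⟩ : Fin (2 * k + 1)) = Fin.last (2 * k) := by
      apply Fin.ext; simp [hie]
    have e1 : (⟨i, Nat.lt_of_succ_lt h⟩ : Fin (2 * k + 1)) =
        Fin.castSucc ⟨i, by omega⟩ := rfl
    rw [e1, e2, extPerm_castSucc, extPerm_last]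
    exact Fin.castSucc_lt_last _

lemma isAlt_restrictPerm {n : ℕ} (π : Equiv.Perm (Fin (n + 1)))
    (h : π (Fin.last n) = Fin.last n) (hπ : IsAlternating π) :
    IsAlternating (restrictPerm π h) := by
  intro i hi
  have hπi := hπ i (Nat.lt_succ_of_lt hi)
  have e1 : (⟨i, Nat.lt_of_succ_lt (Nat.lt_succ_of_lt hi)⟩ : Fin (n + 1)) =
      Fin.castSucc ⟨i, Nat.lt_of_succ_lt hi⟩ := rfl
  have e2 : (⟨i + 1, Nat.lt_succ_of_lt hi⟩ : Fin (n + 1)) = Fin.castSucc ⟨i + 1, hi⟩ := rfl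
  rw [e1, e2] at hπi
  split_ifs with hpar
  · rw [if_pos hpar] at hπi
    apply Fin.castSucc_lt_castSucc_iff.mp
    rw [castSucc_restrictPerm, castSucc_restrictPerm]
    exact hπi
  · rw [if_neg hpar] at hπi
    apply Fin.castSucc_lt_castSucc_iff.mp
    rw [castSucc_restrictPerm, castSucc_restrictPerm]
    exact hπi

lemma last_fixed {k : ℕ} (π : Equiv.Perm (Fin (2 * k + 1))) (ha : IsAlternating π)
    (hc : fixedPointCount π = k + 1) : π (Fin.last (2 * k)) = Fin.last (2 * k) := by
  classical
  set S := Finset.univ.filter (fun i => π i = i) with hS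
  set f : Fin (2 * k + 1) → Fin (k + 1) := fun i => ⟨i.val / 2, by omega⟩ with hf
  have hinj : Set.InjOn f S := by
    intro i hi j hj hij
    by_contra hne
    have hi2 : π i = i := (Finset.mem_filter.1 hi).2
    have hj2 : π j = j := (Finset.mem_filter.1 hj).2
    have hv : i.val / 2 = j.val / 2 := congrArg Fin.val hij
    have hne' : i.val ≠ j.val := fun hx => hne (Fin.ext hx)
    have hcase : (i.val % 2 = 0 ∧ j.val = i.val + 1) ∨ (j.val % 2 = 0 ∧ i.val = j.val + 1) := by
      omega
    rcases hcase with ⟨hev, hsuc⟩ | ⟨hev, hsuc⟩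
    · have hlt := ha i.val (by omega)
      rw [if_pos hev] at hlt
      have e1 : (⟨i.val, _⟩ : Fin (2 * k + 1)) = i := Fin.ext rfl
      have e2 : (⟨i.val + 1, by omega⟩ : Fin (2 * k + 1)) = j := Fin.ext (by simp; omega)
      rw [e1, e2, hi2, hj2] at hlt
      have := Fin.lt_iff_val_lt_val.mp hlt
      omega
    · have hlt := ha j.val (by omega)
      rw [if_pos hev] at hlt
      have e1 : (⟨j.val, _⟩ : Fin (2 * k + 1)) = j := Fin.ext rfl
      have e2 : (⟨j.val + 1, by omega⟩ : Fin (2 * k + 1)) = i := Fin.ext (by simp; omega)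
      rw [e1, e2, hi2, hj2] at hlt
      have := Fin.lt_iff_val_lt_val.mp hlt
      omega
  have himg : S.image f = Finset.univ := by
    apply Finset.eq_univ_of_card
    rw [Finset.card_image_of_injOn hinj]
    have hcard : S.card = k + 1 := hc
    rw [hcard, Fintype.card_fin]
  have hmem : (⟨k, by omega⟩ : Fin (k + 1)) ∈ S.image f := himg ▸ Finset.mem_univ _
  obtain ⟨i, hiS, hfi⟩ := Finset.mem_image.1 hmem
  have hval : i.val / 2 = k := congrArg Fin.val hfi
  have hlast : i = Fin.last (2 * k) := by
    apply Fin.ext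
    have := i.isLt
    simp only [Fin.val_last]
    omega
  rw [← hlast]
  exact hlast ▸ (Finset.mem_filter.1 hiS).2

lemma main_equiv (k : ℕ) :
    Nat.card {π : Equiv.Perm (Fin (2 * k + 1)) //
        IsAlternating π ∧ fixedPointCount π = k + 1} =
      Nat.card {π : Equiv.Perm (Fin (2 * k)) //
        IsAlternating π ∧ fixedPointCount π = k} := by
  apply Nat.card_congr
  exact
    { toFun := fun p =>
        ⟨restrictPerm p.1 (last_fixed p.1 p.2.1 p.2.2),
          isAlt_restrictPerm p.1 _ p.2.1, by
            have h1 := fpc_extPerm (restrictPerm p.1 (last_fixed p.1 p.2.1 p.2.2))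
            rw [extPerm_restrictPerm] at h1
            have h2 := p.2.2
            omega⟩
      invFun := fun s =>
        ⟨extPerm s.1, isAlt_extPerm s.1 s.2.1, by rw [fpc_extPerm, s.2.2]⟩
      left_inv := fun p => Subtype.ext (extPerm_restrictPerm p.1 (last_fixed p.1 p.2.1 p.2.2))
      right_inv := fun s => Subtype.ext (restrictPerm_extPerm s.1 (extPerm_last s.1)) }

/-- For every positive integer `m`, the number of alternating permutations of `[2m-1]` with
exactly `m` fixed points equals the number of alternating permutations of `[2m-2]` with
exactly `m-1` fixed points. -/
theorem alternating_odd_count_eq (m : ℕ) (hm : 1 ≤ m) :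
    Nat.card {π : Equiv.Perm (Fin (2 * m - 1)) //
        IsAlternating π ∧ fixedPointCount π = m} =
      Nat.card {π : Equiv.Perm (Fin (2 * m - 2)) //
        IsAlternating π ∧ fixedPointCount π = m - 1} := by
  obtain ⟨k, rfl⟩ : ∃ k, m = k + 1 := ⟨m - 1, by omega⟩
  simp only [show 2 * (k + 1) - 1 = 2 * k + 1 from by omega,
    show 2 * (k + 1) - 2 = 2 * k from by omega,
    show k + 1 - 1 = k from rfl]
  exact main_equiv k
end
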